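/- arXiv:2411.06396 — 2 statements merged into one kernel-verified Lean document; each statement's English description precedes it below -/
import Mathlib

section
/- Let n be a positive integer and X a real n×n matrix such that every diagonal entry of X is positive, every off-diagonal entry of X is nonpositive, and for every index i the i-th row sum plus the i-th column sum is positive, i.e. (Σ_j X_{ij}) + (Σ_j X_{ji}) > 0. Then X is positive definite, i.e. xᵀXx > 0 for every nonzero x ∈ ℝⁿ. -/
open Matrix

/-- A real square matrix with positive diagonal entries, nonpositive
off-diagonal entries, and positive (row sum + column sum) at each index,
is positive definite. -/
theorem posDef_of_diag_dominance
    (n : ℕ) (hn : 0 < n) (X : Matrix (Fin n) (Fin n) ℝ)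
    (hdiag : ∀ i, 0 < X i i)
    (hoff : ∀ i j, i ≠ j → X i j ≤ 0)
    (hsum : ∀ i, 0 < (∑ j, X i j) + (∑ j, X j i)) :
    ∀ x : Fin n → ℝ, x ≠ 0 → 0 < x ⬝ᵥ (X *ᵥ x) := by
  intro x hx
  have h1 : x ⬝ᵥ (X *ᵥ x) = ∑ i, ∑ j, x i * X i j * x j := by
    simp [dotProduct, mulVec, Finset.mul_sum, mul_assoc]
  have key : 2 * (x ⬝ᵥ (X *ᵥ x))
      = (∑ i, x i ^ 2 * ((∑ j, X i j) + (∑ j, X j i)))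
        + ∑ i, ∑ j, (if i = j then 0 else (-X i j) * (x i - x j) ^ 2) := by
    rw [h1]
    have h2 : (∑ i, x i ^ 2 * ((∑ j, X i j) + (∑ j, X j i)))
        = ∑ i, ∑ j, (x i ^ 2 * X i j + x j ^ 2 * X i j) := by
      have hswap : (∑ i, ∑ j, x i ^ 2 * X j i) = ∑ i, ∑ j, x j ^ 2 * X i j :=
        Finset.sum_comm
      simp only [mul_add, Finset.sum_add_distrib, Finset.mul_sum, hswap]
    rw [h2, ← Finset.sum_add_distrib, Finset.mul_sum]
    refine Finset.sum_congr rfl fun i _ => ?_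
    rw [← Finset.sum_add_distrib, Finset.mul_sum]
    refine Finset.sum_congr rfl fun j _ => ?_
    by_cases h : i = j
    · subst h; simp; ring
    · simp only [if_neg h]; ring
  have hB : 0 ≤ ∑ i, ∑ j, (if i = j then 0 else (-X i j) * (x i - x j) ^ 2) := by
    refine Finset.sum_nonneg fun i _ => Finset.sum_nonneg fun j _ => ?_
    by_cases h : i = j
    · simp [h]
    · simp only [if_neg h]
      exact mul_nonneg (by linarith [hoff i j h]) (sq_nonneg _)
  have hA : 0 < ∑ i, x i ^ 2 * ((∑ j, X i j) + (∑ j, X j i)) := by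
    obtain ⟨i₀, hi₀⟩ := Function.ne_iff.mp hx
    refine Finset.sum_pos' (fun i _ => mul_nonneg (sq_nonneg _) (le_of_lt (hsum i)))
      ⟨i₀, Finset.mem_univ _, ?_⟩
    have : 0 < x i₀ ^ 2 := pow_two_pos_of_ne_zero hi₀
    exact mul_pos this (hsum i₀)
  linarith
end

section
/- Let n and m be positive integers, γ ∈ ℝ, P a real n×n matrix, d ∈ ℝⁿ, and for each s ∈ {1,…,n} let φ(s) ∈ ℝᵐ; let Φ be the n×m matrix whose s-th row is φ(s)ᵀ, and D := diag(d). Then Σ_s d_s · φ(s) · (φ(s) − γ·Σ_{s'} P_{s s'} φ(s'))ᵀ − (Σ_s d_s · φ(s)) · (Σ_s d_s · (φ(s) − γ·Σ_{s'} P_{s s'} φ(s')))ᵀ = Φᵀ(D − d dᵀ)(I − γP)Φ. -/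
/-!
Write `Φ` for the feature matrix and `Ψ = (1 - γP)Φ`, whose `s`-th row is `φ(s) - γ Σ P s s' φ(s')`.
A `d`-weighted sum of outer products of rows is `Φᵀ diag(d) Ψ`, and the two weighted means are
`dᵀΦ` and `dᵀΨ`, whose outer product is `Φᵀ (d dᵀ) Ψ`; subtracting gives the closed form.
-/

open Matrix

namespace Matrix

variable {ι m n R : Type*} [Fintype ι]

theorem sum_smul_vecMulVec_eq_transpose_mul_diagonal_mul [DecidableEq ι] [CommSemiring R]
    (c : ι → R) (A : Matrix ι m R) (B : Matrix ι n R) :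
    ∑ i, c i • vecMulVec (A i) (B i) = Aᵀ * diagonal c * B := by
  ext j k
  simp only [sum_apply, smul_apply, vecMulVec_apply, mul_apply, transpose_apply,
    diagonal_apply, mul_ite, mul_zero, Finset.sum_ite_eq', Finset.mem_univ, if_true, smul_eq_mul]
  exact Finset.sum_congr rfl fun i _ => by ring

theorem vecMulVec_vecMul_vecMul [CommSemiring R] (v : ι → R) (A : Matrix ι m R)
    (B : Matrix ι n R) :
    vecMulVec (v ᵥ* A) (v ᵥ* B) = Aᵀ * vecMulVec v v * B := by
  rw [mul_vecMulVec, vecMulVec_mul, mulVec_transpose]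

theorem one_sub_smul_mul_apply [DecidableEq ι] [CommRing R] (c : R) (P : Matrix ι ι R)
    (A : Matrix ι m R) (i : ι) :
    ((1 - c • P) * A : Matrix ι m R) i = A i - c • ∑ j, P i j • A j := by
  rw [Matrix.sub_mul, Matrix.one_mul, Matrix.smul_mul, ← vecMul_eq_sum, ← mul_apply_eq_vecMul]
  rfl

end Matrix

theorem vmtd_key_matrix_closed_form_general
    (n m : ℕ) (γ : ℝ)
    (P : Matrix (Fin n) (Fin n) ℝ) (d : Fin n → ℝ)
    (φ : Fin n → Fin m → ℝ) :
    (∑ s, d s • vecMulVec (φ s) (φ s - γ • ∑ s', P s s' • φ s'))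
      - vecMulVec (∑ s, d s • φ s)
          (∑ s, d s • (φ s - γ • ∑ s', P s s' • φ s'))
    = (Matrix.of φ)ᵀ * (diagonal d - vecMulVec d d) * (1 - γ • P)
        * Matrix.of φ := by
  set Φ := Matrix.of φ
  set Ψ : Matrix (Fin n) (Fin m) ℝ := (1 - γ • P) * Φ
  have hrow (s : Fin n) : φ s - γ • ∑ s', P s s' • φ s' = Ψ s :=
    (one_sub_smul_mul_apply γ P Φ s).symm
  calc
    _ = ∑ s, d s • vecMulVec (Φ s) (Ψ s) - vecMulVec (d ᵥ* Φ) (d ᵥ* Ψ) := by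
      simp only [hrow, vecMul_eq_sum]
      rfl
    _ = Φᵀ * (diagonal d - vecMulVec d d) * Ψ := by
      rw [sum_smul_vecMulVec_eq_transpose_mul_diagonal_mul, vecMulVec_vecMul_vecMul,
        ← Matrix.sub_mul, ← Matrix.mul_sub]
    _ = _ := by rw [Matrix.mul_assoc _ (1 - γ • P)]

/-- Closed matrix form of the VMTD key matrix:
`E[(φ - γφ')φᵀ] - E[φ - γφ']E[φᵀ] = Φᵀ(D - d dᵀ)(I - γP)Φ`. -/
theorem vmtd_key_matrix_closed_form
    (n m : ℕ) (hn : 0 < n) (hm : 0 < m) (γ : ℝ)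
    (P : Matrix (Fin n) (Fin n) ℝ) (d : Fin n → ℝ)
    (φ : Fin n → Fin m → ℝ) :
    (∑ s, d s • vecMulVec (φ s) (φ s - γ • ∑ s', P s s' • φ s'))
      - vecMulVec (∑ s, d s • φ s)
          (∑ s, d s • (φ s - γ • ∑ s', P s s' • φ s'))
    = (Matrix.of φ)ᵀ * (diagonal d - vecMulVec d d) * (1 - γ • P)
        * Matrix.of φ :=
  vmtd_key_matrix_closed_form_general n m γ P d φ
end
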